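/- For each integer k ≥ 1 define the affine algebraic curve C_{2k} = {G(T_{2k}(v), v) : v ∈ ℂ} ⊂ ℂ², i.e. the set of points (1 + v·T_{2k}(v) + v², (−2 + T_{2k}(v)² + 6v² + T_{2k}(v)·(3v + v³))/2) for v ∈ ℂ. Then: (1) for every positive integer d, any map g : ℂ² → ℂ² satisfying g(G(u,v)) = G(T_d(u), T_d(v)) for all u, v ∈ ℂ maps each C_{2k} onto itself, g(C_{2k}) = C_{2k}; and (2) the sets C_{2k}, k ≥ 1, are pairwise distinct; in particular there are infinitely many affine algebraic curves invariant under g_d for every d. -/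

import Mathlib

/-- The polynomial parametrization of ℂ²/D₃ ≅ ℂ². -/
noncomputable def G (u v : ℂ) : ℂ × ℂ :=
  (1 + u * v + v ^ 2, (-2 + u ^ 2 + 6 * v ^ 2 + u * v * (3 + v ^ 2)) / 2)

/-!
(1) Since `T_a ∘ T_b = T_{ab}`, the polynomials `T_{2k}` and `T_d` commute, so
`g (G (T_{2k} v) v) = G (T_{2k} (T_d v)) (T_d v)`; as `T_d` is surjective, `g` maps `C_{2k}`
onto itself.

(2) For `k < l` let `σ = -ζ` with `ζ` a primitive `(2l+1)`-th root of unity and `v₀ = σ + σ⁻¹`.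
Then `T_{2l}(v₀) = -v₀`, so `G (-v₀) v₀ ∈ C_{2l}`; its first coordinate is `1`.
The points of `C_{2k}` with first coordinate `1` come from `v = 0` or from `T_{2k}(v) = -v`,
i.e. `v = s + s⁻¹` with `s ^ (2k ± 1) = -1`. Comparing second coordinates forces
`(ζ ^ 4) ^ m = 1` for some `0 < m ≤ 2k + 1 < 2l + 1`, which is impossible.
-/

open Polynomial

lemma image_range_eq_of_semiconj {α β : Type*} (F : α → α → β) {g : β → β} {P Q : α → α}
    (hg : ∀ u v, g (F u v) = F (Q u) (Q v)) (hPQ : ∀ v, Q (P v) = P (Q v))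
    (hQ : Function.Surjective Q) :
    g '' Set.range (fun v => F (P v) v) = Set.range (fun v => F (P v) v) := by
  have hcomp : (g ∘ fun v => F (P v) v) = (fun v => F (P v) v) ∘ Q := by
    funext v
    simp only [Function.comp_apply, hg, hPQ]
  rw [← Set.range_comp, hcomp, hQ.range_comp]

lemma exists_add_inv_eq {K : Type*} [Field K] [IsAlgClosed K] (w : K) :
    ∃ s : K, s ≠ 0 ∧ s + s⁻¹ = w := by
  obtain ⟨s, hs⟩ := IsAlgClosed.exists_root (X ^ 2 - C w * X + 1 : K[X])
    (by rw [show (X ^ 2 - C w * X + 1 : K[X]).degree = 2 by compute_degree!]; decide)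
  have h : s ^ 2 - w * s + 1 = 0 := by simpa using hs
  have hs0 : s ≠ 0 := by rintro rfl; simp at h
  refine ⟨s, hs0, ?_⟩
  field_simp
  linear_combination h

lemma pow_add_inv_eq_neg_add_inv_iff {K : Type*} [Field K] {s : K} (hs : s ≠ 0) {n : ℕ}
    (hn : 0 < n) :
    s ^ n + (s ^ n)⁻¹ = -(s + s⁻¹) ↔ s ^ (n + 1) = -1 ∨ s ^ (n - 1) = -1 := by
  obtain ⟨n, rfl⟩ := Nat.exists_eq_add_of_lt hn
  have hfac : s ^ (n + 1) + (s ^ (n + 1))⁻¹ + (s + s⁻¹)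
      = (s ^ (n + 2) + 1) * (s ^ n + 1) / s ^ (n + 1) := by
    field_simp
    ring
  simp only [zero_add, add_tsub_cancel_right, ← add_eq_zero_iff_eq_neg, hfac, div_eq_zero_iff,
    mul_eq_zero, pow_ne_zero _ hs, or_false]

lemma sq_pow_eq_one_of_sq_add_inv_eq {K : Type*} [Field K] {a b : K} (ha : a ≠ 0) (hb : b ≠ 0)
    (hab : (a + a⁻¹) ^ 2 = (b + b⁻¹) ^ 2) {m : ℕ} (ham : (a ^ 2) ^ m = 1) :
    (b ^ 2) ^ m = 1 := by
  have hfac : (b ^ 2 - a ^ 2) * (b ^ 2 * a ^ 2 - 1) = 0 := by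
    field_simp at hab
    linear_combination (-1 : K) * hab
  rcases mul_eq_zero.1 hfac with h | h
  · rwa [sub_eq_zero.1 h]
  · rw [← one_pow m, ← sub_eq_zero.1 h, mul_pow, ham, mul_one]

lemma sq_add_inv_sq {K : Type*} [Field K] {s : K} (hs : s ≠ 0) :
    s ^ 2 + (s ^ 2)⁻¹ = (s + s⁻¹) ^ 2 - 2 := by
  field_simp
  ring

lemma G_fst_eq_one_iff {u v : ℂ} : (G u v).1 = 1 ↔ v = 0 ∨ u = -v := by
  have hfac : (G u v).1 = 1 ↔ v * (u + v) = 0 := by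
    simp only [G]
    constructor <;> intro h <;> linear_combination h
  rw [hfac, mul_eq_zero, add_eq_zero_iff_eq_neg]

lemma G_zero_right (u : ℂ) : G u 0 = (1, (u ^ 2 - 2) / 2) := by
  simp only [G, Prod.mk.injEq]
  constructor <;> ring

lemma G_neg_self (v : ℂ) : G (-v) v = (1, 1 - (v ^ 2 - 2) ^ 2 / 2) := by
  simp only [G, Prod.mk.injEq]
  constructor <;> ring

lemma IsPrimitiveRoot.pow_four_pow_ne_one {K : Type*} [CommRing K] {ζ : K} {N m : ℕ}
    (hζ : IsPrimitiveRoot ζ N) (hN : Odd N) (hm : 0 < m) (hmN : m < N) : (ζ ^ 4) ^ m ≠ 1 :=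
  (hζ.pow_of_coprime 4 (Nat.Coprime.pow_left 2 (Nat.coprime_two_left.2 hN))).pow_ne_one_of_pos_of_lt
    hm.ne' hmN

section Chebyshev

variable {T : ℕ → ℤ[X]}
  (hT : ∀ n : ℕ, 0 < n → ∀ s : ℂ, s ≠ 0 →
    aeval (s + s⁻¹) (T n) = s ^ (n : ℤ) + s ^ (-(n : ℤ)))
include hT

lemma aeval_add_inv {n : ℕ} (hn : 0 < n) {s : ℂ} (hs : s ≠ 0) :
    aeval (s + s⁻¹) (T n) = s ^ n + (s ^ n)⁻¹ := by
  rw [hT n hn s hs, zpow_neg, zpow_natCast]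

lemma aeval_aeval {a b : ℕ} (ha : 0 < a) (hb : 0 < b) (v : ℂ) :
    aeval (aeval v (T a)) (T b) = aeval v (T (a * b)) := by
  obtain ⟨s, hs, rfl⟩ := exists_add_inv_eq v
  rw [aeval_add_inv hT ha hs, aeval_add_inv hT hb (pow_ne_zero a hs),
    aeval_add_inv hT (Nat.mul_pos ha hb) hs, pow_mul]

lemma aeval_surjective {d : ℕ} (hd : 0 < d) : Function.Surjective fun v : ℂ => aeval v (T d) := by
  intro w
  obtain ⟨s, hs, rfl⟩ := exists_add_inv_eq w
  obtain ⟨r, rfl⟩ := IsAlgClosed.exists_pow_nat_eq s hd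
  exact ⟨r + r⁻¹, aeval_add_inv hT hd (by rintro rfl; simp [hd.ne'] at hs)⟩

lemma aeval_zero_sq {n : ℕ} (hn : 0 < n) (hev : Even n) : aeval (0 : ℂ) (T n) ^ 2 = 4 := by
  have hI : Complex.I ^ n * Complex.I ^ n = 1 := by
    rw [← mul_pow, Complex.I_mul_I, hev.neg_one_pow]
  have hzero : (0 : ℂ) = Complex.I + Complex.I⁻¹ := by rw [Complex.inv_I, add_neg_cancel]
  rw [hzero, aeval_add_inv hT hn Complex.I_ne_zero, inv_eq_of_mul_eq_one_right hI]
  linear_combination 4 * hI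

lemma aeval_eq_neg_iff {n : ℕ} (hn : 0 < n) {s : ℂ} (hs : s ≠ 0) :
    aeval (s + s⁻¹) (T n) = -(s + s⁻¹) ↔ s ^ (n + 1) = -1 ∨ s ^ (n - 1) = -1 := by
  rw [aeval_add_inv hT hn hs, pow_add_inv_eq_neg_add_inv_iff hs hn]

lemma exists_sq_pow_eq_one_of_G_eq_G_neg {k : ℕ} (hk : 1 ≤ k) {w v : ℂ}
    (h : G (aeval w (T (2 * k))) w = G (-v) v) :
    ∃ a : ℂ, a ≠ 0 ∧ ∃ m : ℕ, 0 < m ∧ m ≤ 2 * k + 1 ∧ (a ^ 2) ^ m = 1 ∧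
      (a + a⁻¹) ^ 2 = (v ^ 2 - 2) ^ 2 := by
  obtain ⟨h1, h2⟩ := Prod.ext_iff.1 (h.trans (G_neg_self v))
  rcases G_fst_eq_one_iff.1 h1 with rfl | hTw
  -- over `w = 0` the second coordinate is `1`, matched by `a = I`, for which `a + a⁻¹ = 0`
  · have h0 := aeval_zero_sq hT (by omega : 0 < 2 * k) (even_two_mul k)
    simp only [G_zero_right] at h2
    refine ⟨Complex.I, Complex.I_ne_zero, 2, two_pos, by omega, by norm_num, ?_⟩
    rw [Complex.inv_I, add_neg_cancel]
    linear_combination (-2 : ℂ) * h2 + h0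
  · obtain ⟨s, hs, rfl⟩ := exists_add_inv_eq w
    simp only [hTw, G_neg_self] at h2
    have hsq : (s ^ 2 + (s ^ 2)⁻¹) ^ 2 = (v ^ 2 - 2) ^ 2 := by
      rw [sq_add_inv_sq hs]
      linear_combination (-2 : ℂ) * h2
    have hpow {m : ℕ} (hm : s ^ m = -1) : ((s ^ 2) ^ 2) ^ m = 1 := by
      rw [show ((s ^ 2) ^ 2) ^ m = (s ^ m) ^ 4 by ring, hm]
      norm_num
    refine ⟨s ^ 2, pow_ne_zero 2 hs, ?_⟩
    rcases (aeval_eq_neg_iff hT (by omega) hs).1 hTw with hm | hm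
    · exact ⟨2 * k + 1, by omega, le_rfl, hpow hm, hsq⟩
    · exact ⟨2 * k - 1, by omega, by omega, hpow hm, hsq⟩

lemma range_G_aeval_ne {k l : ℕ} (hk : 1 ≤ k) (hkl : k < l) :
    Set.range (fun v => G (aeval v (T (2 * k))) v) ≠
      Set.range (fun v => G (aeval v (T (2 * l))) v) := by
  obtain ⟨ζ, hζ⟩ : ∃ ζ : ℂ, IsPrimitiveRoot ζ (2 * l + 1) :=
    ⟨_, Complex.isPrimitiveRoot_exp _ (by omega)⟩
  set σ := -ζ with hσ_def
  have hσ0 : σ ≠ 0 := neg_ne_zero.2 (hζ.ne_zero (by omega))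
  have hσ : σ ^ (2 * l + 1) = -1 := by
    rw [hσ_def, Odd.neg_pow (odd_two_mul_add_one l), hζ.pow_eq_one]
  set v₀ := σ + σ⁻¹
  have hv₀ : aeval v₀ (T (2 * l)) = -v₀ := (aeval_eq_neg_iff hT (by omega) hσ0).2 (Or.inl hσ)
  intro hEq
  obtain ⟨w, hw⟩ : G (-v₀) v₀ ∈ Set.range (fun v => G (aeval v (T (2 * k))) v) :=
    hEq ▸ ⟨v₀, by simp only [hv₀]⟩
  obtain ⟨a, ha, m, hm, hmk, ham, hab⟩ := exists_sq_pow_eq_one_of_G_eq_G_neg hT hk hw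
  have hab' : (a + a⁻¹) ^ 2 = (σ ^ 2 + (σ ^ 2)⁻¹) ^ 2 := by
    rw [hab, sq_add_inv_sq hσ0]
  have hζm := sq_pow_eq_one_of_sq_add_inv_eq ha (pow_ne_zero 2 hσ0) hab' ham
  rw [hσ_def, neg_sq, ← pow_mul ζ 2 2] at hζm
  exact hζ.pow_four_pow_ne_one (odd_two_mul_add_one l) hm (by omega) hζm

end Chebyshev

/-- For each `k ≥ 1` the affine algebraic curve `C_{2k} = {G(T_{2k}(v), v) : v ∈ ℂ}`
is mapped onto itself by every induced map `g_d`, and the curves `C_{2k}` are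
pairwise distinct; hence there are infinitely many invariant affine algebraic curves. -/
theorem infinitely_many_invariant_curves (T : ℕ → Polynomial ℤ)
    (hT : ∀ n : ℕ, 0 < n → ∀ s : ℂ, s ≠ 0 →
      Polynomial.aeval (s + s⁻¹) (T n) = s ^ (n : ℤ) + s ^ (-(n : ℤ))) :
    (∀ d : ℕ, 0 < d → ∀ g : ℂ × ℂ → ℂ × ℂ,
      (∀ u v : ℂ, g (G u v) = G (Polynomial.aeval u (T d)) (Polynomial.aeval v (T d))) →
      ∀ k : ℕ, 1 ≤ k →
        g '' {w : ℂ × ℂ | ∃ v : ℂ, G (Polynomial.aeval v (T (2 * k))) v = w}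
          = {w : ℂ × ℂ | ∃ v : ℂ, G (Polynomial.aeval v (T (2 * k))) v = w}) ∧
    (∀ k l : ℕ, 1 ≤ k → 1 ≤ l → k ≠ l →
      {w : ℂ × ℂ | ∃ v : ℂ, G (Polynomial.aeval v (T (2 * k))) v = w}
        ≠ {w : ℂ × ℂ | ∃ v : ℂ, G (Polynomial.aeval v (T (2 * l))) v = w}) := by
  refine ⟨fun d hd g hg k hk => ?_, fun k l hk hl hkl => ?_⟩
  · have hcomm (v : ℂ) : aeval (aeval v (T (2 * k))) (T d) = aeval (aeval v (T d)) (T (2 * k)) := by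
      rw [aeval_aeval hT (by omega) hd, aeval_aeval hT hd (by omega), mul_comm]
    exact image_range_eq_of_semiconj G hg hcomm (aeval_surjective hT hd)
  · rcases hkl.lt_or_gt with h | h
    · exact range_G_aeval_ne hT hk h
    · exact (range_G_aeval_ne hT hl h).symm
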